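/- The relaxation R(G) = {x ∈ R_edge(G) : x(C) ≤ 1.4 for every 3-clique C of G} has the persistency property for every graph G: for every objective c and every c-maximal point x of R(G), there is a c-maximal stable set of G containing all vertices v with x_v = 1 and avoiding all vertices v with x_v = 0. -/

import Mathlib

/-
Take a c-maximal stable set T and round it towards x: S := (T ∖ {x = 0}) ∪ {x = 1}. The edge
constraints make S stable. Moving x by a small ε towards T and away from S (raise the zeros of x
in T to ε, lower the ones of x outside T to 1 - ε) stays feasible, because T is stable and any
bound β > 1 on triangles leaves room for ε. Optimality of x then forces c(T) ≤ c(S), so S is a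
c-maximal stable set that contains {x = 1} and avoids {x = 0}.
-/

def IsStable {V : Type*} (G : SimpleGraph V) (S : Finset V) : Prop :=
  ∀ u ∈ S, ∀ v ∈ S, ¬ G.Adj u v

/-- The edge relaxation strengthened by the (weak) triangle inequalities `x(C) ≤ 1.4`. -/
def RtriA {V : Type*} (G : SimpleGraph V) : Set (V → ℝ) :=
  {x | (∀ v, 0 ≤ x v ∧ x v ≤ 1) ∧ (∀ u v, G.Adj u v → x u + x v ≤ 1) ∧
    ∀ u v w, G.Adj u v → G.Adj v w → G.Adj u w → x u + x v + x w ≤ 1.4}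

open Filter Topology

def triangleRelaxation {V : Type*} (G : SimpleGraph V) (β : ℝ) : Set (V → ℝ) :=
  {x | (∀ v, 0 ≤ x v ∧ x v ≤ 1) ∧ (∀ u v, G.Adj u v → x u + x v ≤ 1) ∧
    ∀ u v w, G.Adj u v → G.Adj v w → G.Adj u w → x u + x v + x w ≤ β}

theorem RtriA_eq_triangleRelaxation {V : Type*} (G : SimpleGraph V) :
    RtriA G = triangleRelaxation G 1.4 :=
  rfl

theorem exists_isStable_forall_sum_le {V : Type*} [Fintype V] [DecidableEq V]
    (G : SimpleGraph V) (c : V → ℝ) :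
    ∃ S : Finset V, IsStable G S ∧ ∀ T : Finset V, IsStable G T → ∑ v ∈ T, c v ≤ ∑ v ∈ S, c v :=
  Set.exists_max_image {S | IsStable G S} (fun S => ∑ v ∈ S, c v) (Set.toFinite _)
    ⟨∅, fun _ h => absurd h (Finset.notMem_empty _)⟩

theorem Filter.eventually_pos_le_of_forall_pos {ι : Type*} [Finite ι] (p : ι → Prop) (a : ι → ℝ)
    (ha : ∀ i, p i → 0 < a i) : ∀ᶠ ε in 𝓝[>] (0 : ℝ), 0 < ε ∧ ∀ i, p i → ε ≤ a i :=
  eventually_mem_nhdsWithin.and <| eventually_all.2 fun i => eventually_imp_distrib_left.2 fun hi =>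
    (eventually_le_nhds (ha i hi)).filter_mono nhdsWithin_le_nhds

section Rounding

variable {V : Type*} [DecidableEq V] {G : SimpleGraph V}

noncomputable def nudgeToward (x : V → ℝ) (T : Finset V) (ε : ℝ) (v : V) : ℝ :=
  if v ∈ T ∧ x v = 0 then ε else if v ∉ T ∧ x v = 1 then 1 - ε else x v

theorem nudgeToward_mem_Icc {x : V → ℝ} {T : Finset V} {ε : ℝ} (hx : ∀ v, 0 ≤ x v ∧ x v ≤ 1)
    (hε₀ : 0 ≤ ε) (hε₁ : ε ≤ 1) (v : V) : 0 ≤ nudgeToward x T ε v ∧ nudgeToward x T ε v ≤ 1 := by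
  unfold nudgeToward
  split_ifs
  exacts [⟨hε₀, hε₁⟩, ⟨by linarith, by linarith⟩, hx v]

theorem nudgeToward_le_of_mem {x : V → ℝ} {T : Finset V} {ε : ℝ} {v : V} (hv : v ∈ T) :
    nudgeToward x T ε v ≤ x v ∨ nudgeToward x T ε v = ε := by
  unfold nudgeToward
  split_ifs <;> simp_all

theorem nudgeToward_le_of_notMem {x : V → ℝ} {T : Finset V} {ε : ℝ} {v : V}
    (hslack : ∀ v, x v < 1 → ε ≤ 1 - x v) (hε : 0 ≤ ε) (hxv : x v ≤ 1) (hv : v ∉ T) :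
    nudgeToward x T ε v ≤ x v ∧ nudgeToward x T ε v ≤ 1 - ε := by
  unfold nudgeToward
  split_ifs with h₀ h₁
  · exact absurd h₀.1 hv
  · exact ⟨by linarith, le_rfl⟩
  · have := hslack v (lt_of_le_of_ne hxv fun h => h₁ ⟨hv, h⟩)
    exact ⟨le_rfl, by linarith⟩

theorem nudgeToward_mem_triangleRelaxation {x : V → ℝ} {T : Finset V} {β ε : ℝ}
    (hx : x ∈ triangleRelaxation G β) (hT : IsStable G T) (hε₀ : 0 ≤ ε) (hε₁ : ε ≤ 1)
    (hεβ : 1 + ε ≤ β) (hslack : ∀ v, x v < 1 → ε ≤ 1 - x v) :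
    nudgeToward x T ε ∈ triangleRelaxation G β := by
  obtain ⟨hbox, hedge, htri⟩ := hx
  set y := nudgeToward x T ε
  have hout : ∀ v ∉ T, y v ≤ x v ∧ y v ≤ 1 - ε := fun v hv =>
    nudgeToward_le_of_notMem hslack hε₀ (hbox v).2 hv
  have edge_of_mem : ∀ u v, G.Adj u v → u ∈ T → y u + y v ≤ 1 := by
    intro u v huv hu
    have hv := hout v fun hv => hT u hu v hv huv
    rcases nudgeToward_le_of_mem (x := x) (ε := ε) hu with h | h <;> linarith [hedge u v huv]
  have tri_of_mem : ∀ u v w, G.Adj u v → G.Adj v w → G.Adj u w → u ∈ T →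
      y u + y v + y w ≤ β := by
    intro u v w huv hvw huw hu
    have hv := hout v fun hv => hT u hu v hv huv
    have hw := hout w fun hw => hT u hu w hw huw
    rcases nudgeToward_le_of_mem (x := x) (ε := ε) hu with h | h <;>
      linarith [hedge v w hvw, htri u v w huv hvw huw]
  refine ⟨nudgeToward_mem_Icc hbox hε₀ hε₁, fun u v huv => ?_, fun u v w huv hvw huw => ?_⟩
  · by_cases hu : u ∈ T
    · exact edge_of_mem u v huv hu
    by_cases hv : v ∈ T
    · linarith [edge_of_mem v u huv.symm hv]
    linarith [hout u hu, hout v hv, hedge u v huv]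
  · by_cases hu : u ∈ T
    · exact tri_of_mem u v w huv hvw huw hu
    by_cases hv : v ∈ T
    · linarith [tri_of_mem v u w huv.symm huw hvw hv]
    by_cases hw : w ∈ T
    · linarith [tri_of_mem w u v huw.symm huv hvw.symm hw]
    linarith [hout u hu, hout v hv, hout w hw, htri u v w huv hvw huw]

variable [Fintype V]

noncomputable def roundToward (x : V → ℝ) (T : Finset V) : Finset V :=
  {v ∈ T | x v ≠ 0} ∪ ({v | x v = 1} : Finset V)

theorem mem_roundToward {x : V → ℝ} {T : Finset V} {v : V} :
    v ∈ roundToward x T ↔ (v ∈ T ∧ x v ≠ 0) ∨ x v = 1 := by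
  simp [roundToward]

theorem mem_roundToward_of_eq_one {x : V → ℝ} {T : Finset V} {v : V} (h : x v = 1) :
    v ∈ roundToward x T :=
  mem_roundToward.2 (Or.inr h)

theorem notMem_roundToward_of_eq_zero {x : V → ℝ} {T : Finset V} {v : V} (h : x v = 0) :
    v ∉ roundToward x T := by
  simp [mem_roundToward, h]

theorem IsStable.roundToward {x : V → ℝ} {T : Finset V} (hT : IsStable G T)
    (hnonneg : ∀ v, 0 ≤ x v) (hedge : ∀ u v, G.Adj u v → x u + x v ≤ 1) :
    IsStable G (roundToward x T) := by
  intro u hu v hv huv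
  have := hedge u v huv
  have := hnonneg u
  have := hnonneg v
  rcases mem_roundToward.1 hu with ⟨huT, hu0⟩ | hu1 <;>
    rcases mem_roundToward.1 hv with ⟨hvT, hv0⟩ | hv1
  · exact hT u huT v hvT huv
  · exact hu0 (by linarith)
  · exact hv0 (by linarith)
  · linarith

theorem nudgeToward_sub (x : V → ℝ) (T : Finset V) (ε : ℝ) (v : V) :
    nudgeToward x T ε v - x v =
      ε * ((if v ∈ T then 1 else 0) - if v ∈ roundToward x T then 1 else 0) := by
  unfold nudgeToward
  by_cases hT : v ∈ T <;> by_cases h0 : x v = 0 <;> by_cases h1 : x v = 1 <;>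
    simp_all [mem_roundToward]

theorem sum_mul_nudgeToward_sub (c x : V → ℝ) (T : Finset V) (ε : ℝ) :
    ∑ v, c v * nudgeToward x T ε v - ∑ v, c v * x v =
      ε * (∑ v ∈ T, c v - ∑ v ∈ roundToward x T, c v) := by
  calc ∑ v, c v * nudgeToward x T ε v - ∑ v, c v * x v
      = ∑ v, c v * (nudgeToward x T ε v - x v) := by simp only [mul_sub, Finset.sum_sub_distrib]
    _ = ε * (∑ v, (if v ∈ T then c v else 0) - ∑ v, if v ∈ roundToward x T then c v else 0) := by
      simp only [nudgeToward_sub, Finset.mul_sum, ← Finset.sum_sub_distrib]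
      refine Finset.sum_congr rfl fun v _ => ?_
      split_ifs <;> ring
    _ = ε * (∑ v ∈ T, c v - ∑ v ∈ roundToward x T, c v) := by
      simp only [Finset.sum_ite_mem, Finset.univ_inter]

theorem eventually_nudgeToward_mem_triangleRelaxation {x : V → ℝ} {T : Finset V} {β : ℝ}
    (hβ : 1 < β) (hx : x ∈ triangleRelaxation G β) (hT : IsStable G T) :
    ∀ᶠ ε in 𝓝[>] (0 : ℝ), 0 < ε ∧ nudgeToward x T ε ∈ triangleRelaxation G β := by
  have hslack := eventually_pos_le_of_forall_pos (fun v => x v < 1) (fun v => 1 - x v)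
    fun v hv => sub_pos.2 hv
  have hsmall : ∀ᶠ ε in 𝓝[>] (0 : ℝ), ε ≤ min 1 (β - 1) :=
    (eventually_le_nhds (lt_min one_pos (sub_pos.2 hβ))).filter_mono nhdsWithin_le_nhds
  filter_upwards [hslack, hsmall] with ε ⟨hε, hεx⟩ hεβ
  exact ⟨hε, nudgeToward_mem_triangleRelaxation hx hT hε.le (le_min_iff.1 hεβ).1
    (by linarith [(le_min_iff.1 hεβ).2]) hεx⟩

theorem sum_le_sum_roundToward {β : ℝ} (hβ : 1 < β) (c x : V → ℝ)
    (hx : x ∈ triangleRelaxation G β)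
    (hmax : ∀ y ∈ triangleRelaxation G β, ∑ v, c v * y v ≤ ∑ v, c v * x v)
    {T : Finset V} (hT : IsStable G T) :
    ∑ v ∈ T, c v ≤ ∑ v ∈ roundToward x T, c v := by
  obtain ⟨ε, hε, hmem⟩ := (eventually_nudgeToward_mem_triangleRelaxation hβ hx hT).exists
  have hgain := sum_mul_nudgeToward_sub c x T ε
  have hopt := hmax _ hmem
  exact sub_nonpos.1 (nonpos_of_mul_nonpos_right (by linarith) hε)

end Rounding

theorem triangleRelaxation_persistent {V : Type*} [Fintype V] [DecidableEq V]
    (G : SimpleGraph V) {β : ℝ} (hβ : 1 < β) (c x : V → ℝ) (hx : x ∈ triangleRelaxation G β)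
    (hmax : ∀ y ∈ triangleRelaxation G β, ∑ v, c v * y v ≤ ∑ v, c v * x v) :
    ∃ S : Finset V, IsStable G S ∧
      (∀ T : Finset V, IsStable G T → ∑ v ∈ T, c v ≤ ∑ v ∈ S, c v) ∧
      (∀ v, x v = 1 → v ∈ S) ∧ (∀ v, x v = 0 → v ∉ S) := by
  obtain ⟨T₀, hT₀, hT₀max⟩ := exists_isStable_forall_sum_le G c
  refine ⟨roundToward x T₀, hT₀.roundToward (fun v => (hx.1 v).1) hx.2.1,
    fun T hT => (hT₀max T hT).trans (sum_le_sum_roundToward hβ c x hx hmax hT₀),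
    fun _ => mem_roundToward_of_eq_one, fun _ => notMem_roundToward_of_eq_zero⟩

/-- The relaxation `R^{(A)}` has the persistency property for every graph. -/
theorem stmt14 {V : Type*} [Fintype V] [DecidableEq V] (G : SimpleGraph V)
    (c : V → ℝ) (x : V → ℝ) (hx : x ∈ RtriA G)
    (hmax : ∀ y ∈ RtriA G, ∑ v, c v * y v ≤ ∑ v, c v * x v) :
    ∃ S : Finset V, IsStable G S ∧
      (∀ T : Finset V, IsStable G T → ∑ v ∈ T, c v ≤ ∑ v ∈ S, c v) ∧
      (∀ v, x v = 1 → v ∈ S) ∧ (∀ v, x v = 0 → v ∉ S) := by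
  rw [RtriA_eq_triangleRelaxation] at hx hmax
  exact triangleRelaxation_persistent G (by norm_num) c x hx hmax
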